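/- Let M be a multi-context system, η a set of integrity constraints over M, and M'' the MCS obtained by adding the context C_0 with ACC_0(∅) = ∅, ACC_0({*}) = {{*}} and the bridge rules obtained from η by adding head (0:*). Then M strongly satisfies η if and only if M is logically consistent and M'' is logically inconsistent. -/

import Mathlib

/-- A ground bridge rule `(i : head) ← pos, not neg` of context `i`:
`pos` and `neg` are sets of pairs `(c, p)` meaning "belief `p` queried in context `c`". -/
structure BridgeRule (ι α : Type*) where
  head : α
  pos : Set (ι × α)
  neg : Set (ι × α)

/-- A ground integrity constraint `← pos, not neg` over an MCS. -/
structure IntegrityConstraint (ι α : Type*) where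
  pos : Set (ι × α)
  neg : Set (ι × α)

/-- A context of an MCS: a logic (given by its semantics `ACC`, mapping each
knowledge base to its set of acceptable belief sets), a knowledge base `kb`,
and a set of bridge rules `br`. -/
structure Context (ι α : Type*) where
  ACC : Set α → Set (Set α)
  kb : Set α
  br : Set (BridgeRule ι α)

/-- A multi-context system: a family of contexts indexed by `ι`. -/
abbrev MCS (ι α : Type*) := ι → Context ι α

/-- A belief state: one belief set per context. -/
abbrev BeliefState (ι α : Type*) := ι → Set α

/-- A bridge rule is applicable in a belief state `S` if every positive body
literal holds in the corresponding belief set and no negative one does. -/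
def BridgeRule.applicable {ι α : Type*} (r : BridgeRule ι α) (S : BeliefState ι α) : Prop :=
  (∀ q ∈ r.pos, q.2 ∈ S q.1) ∧ ∀ q ∈ r.neg, q.2 ∉ S q.1

/-- `app M i S`: the heads of the applicable bridge rules of context `i` w.r.t. `S`. -/
def app {ι α : Type*} (M : MCS ι α) (i : ι) (S : BeliefState ι α) : Set α :=
  {a | ∃ r ∈ (M i).br, r.applicable S ∧ r.head = a}

/-- `S` is an equilibrium of `M` if `S i ∈ ACC_i (kb_i ∪ app_i S)` for every `i`. -/
def IsEquilibrium {ι α : Type*} (M : MCS ι α) (S : BeliefState ι α) : Prop :=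
  ∀ i, S i ∈ (M i).ACC ((M i).kb ∪ app M i S)

/-- Logical consistency: existence of an equilibrium. -/
def LogConsistent {ι α : Type*} (M : MCS ι α) : Prop :=
  ∃ S, IsEquilibrium M S

/-- A belief state satisfies an integrity constraint unless all its positive body
literals hold and all its negative body literals fail. -/
def Satisfies {ι α : Type*} (S : BeliefState ι α) (c : IntegrityConstraint ι α) : Prop :=
  ¬ ((∀ q ∈ c.pos, q.2 ∈ S q.1) ∧ ∀ q ∈ c.neg, q.2 ∉ S q.1)

/-- `M` weakly satisfies `η`: some equilibrium of `M` satisfies every IC in `η`. -/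
def WeakSat {ι α : Type*} (M : MCS ι α) (η : Set (IntegrityConstraint ι α)) : Prop :=
  ∃ S, IsEquilibrium M S ∧ ∀ c ∈ η, Satisfies S c

/-- `M` strongly satisfies `η`: `M` is logically consistent and every
equilibrium of `M` satisfies every IC in `η`. -/
def StrongSat {ι α : Type*} (M : MCS ι α) (η : Set (IntegrityConstraint ι α)) : Prop :=
  LogConsistent M ∧ ∀ S, IsEquilibrium M S → ∀ c ∈ η, Satisfies S c

/-- Relabel a body literal for the extended system (old contexts become `some i`). -/
def liftPair {ι α : Type*} (q : ι × α) : Option ι × α := (some q.1, q.2)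

/-- Lift a bridge rule of `M` to the extended system. -/
def liftRule {ι α : Type*} (r : BridgeRule ι α) : BridgeRule (Option ι) α :=
  ⟨r.head, liftPair '' r.pos, liftPair '' r.neg⟩

/-- The bridge rule `(0 : *) ← body of c` obtained from an integrity constraint `c`. -/
def icRule {ι α : Type*} (star : α) (c : IntegrityConstraint ι α) : BridgeRule (Option ι) α :=
  ⟨star, liftPair '' c.pos, liftPair '' c.neg⟩

/-- The MCS obtained from `M` by adding an extra context `C₀` (index `none`)
with empty knowledge base, semantics `ACC0`, and, for each integrity constraint
in `η`, a bridge rule with head `(0 : *)` and the same body. -/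
def extMCS {ι α : Type*} (M : MCS ι α) (η : Set (IntegrityConstraint ι α))
    (star : α) (ACC0 : Set α → Set (Set α)) : MCS (Option ι) α :=
  fun o => match o with
  | some i => ⟨(M i).ACC, (M i).kb, liftRule '' (M i).br⟩
  | none => ⟨ACC0, ∅, icRule star '' η⟩

/-! An equilibrium of `M''` restricts to an equilibrium of `M`, and its `C₀` component is
acceptable only when the body of some constraint fires, since otherwise `C₀` receives `∅`, which
has no acceptable belief set. Conversely, an equilibrium of `M` violating a constraint extends to
one of `M''` by the belief set `{*}`. -/

section Extension

variable {ι α : Type*}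

lemma liftRule_applicable_iff (r : BridgeRule ι α) (S : BeliefState (Option ι) α) :
    (liftRule r).applicable S ↔ r.applicable (S ∘ some) := by
  simp only [BridgeRule.applicable, liftRule, Set.forall_mem_image]
  rfl

lemma icRule_applicable_iff (star : α) (c : IntegrityConstraint ι α) (S : BeliefState (Option ι) α) :
    (icRule star c).applicable S ↔ ¬ Satisfies (S ∘ some) c := by
  simp only [BridgeRule.applicable, icRule, Set.forall_mem_image, Satisfies, not_not]
  rfl

variable (M : MCS ι α) (η : Set (IntegrityConstraint ι α)) (star : α)
  (ACC0 : Set α → Set (Set α)) (S : BeliefState (Option ι) α)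

lemma app_extMCS_some (i : ι) : app (extMCS M η star ACC0) (some i) S = app M i (S ∘ some) := by
  ext a
  constructor
  · rintro ⟨_, ⟨r, hr, rfl⟩, happ, rfl⟩
    exact ⟨r, hr, (liftRule_applicable_iff r S).mp happ, rfl⟩
  · rintro ⟨r, hr, happ, rfl⟩
    exact ⟨liftRule r, ⟨r, hr, rfl⟩, (liftRule_applicable_iff r S).mpr happ, rfl⟩

lemma app_extMCS_none :
    app (extMCS M η star ACC0) none S = {a | a = star ∧ ∃ c ∈ η, ¬ Satisfies (S ∘ some) c} := by
  ext a
  constructor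
  · rintro ⟨_, ⟨c, hc, rfl⟩, happ, rfl⟩
    exact ⟨rfl, c, hc, (icRule_applicable_iff star c S).mp happ⟩
  · rintro ⟨rfl, c, hc, hviol⟩
    exact ⟨icRule a c, ⟨c, hc, rfl⟩, (icRule_applicable_iff a c S).mpr hviol, rfl⟩

lemma isEquilibrium_extMCS_iff :
    IsEquilibrium (extMCS M η star ACC0) S ↔
      IsEquilibrium M (S ∘ some) ∧ S none ∈ ACC0 (app (extMCS M η star ACC0) none S) := by
  rw [IsEquilibrium, Option.forall, and_comm]
  refine and_congr (forall_congr' fun i => ?_) ?_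
  · rw [app_extMCS_some]
    rfl
  · show S none ∈ ACC0 (∅ ∪ _) ↔ _
    rw [Set.empty_union]

lemma logConsistent_extMCS_iff (hACC0_empty : ACC0 ∅ = ∅)
    (hACC0_star : ACC0 {star} = {{star}}) :
    LogConsistent (extMCS M η star ACC0) ↔
      ∃ S, IsEquilibrium M S ∧ ∃ c ∈ η, ¬ Satisfies S c := by
  constructor
  · rintro ⟨S, hS⟩
    rw [isEquilibrium_extMCS_iff, app_extMCS_none] at hS
    refine ⟨S ∘ some, hS.1, ?_⟩
    by_contra hsat
    simp only [hsat, and_false, Set.ofPred_false, hACC0_empty] at hS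
    exact hS.2
  · rintro ⟨S, hS, hviol⟩
    refine ⟨fun o => o.elim {star} S, ?_⟩
    rw [isEquilibrium_extMCS_iff, app_extMCS_none]
    refine ⟨hS, ?_⟩
    simp only [Function.comp_def, Option.elim_some, hviol, and_true, Set.ofPred_eq_eq_singleton,
      hACC0_star, Option.elim_none, Set.mem_singleton_iff]

end Extension

/-- `M` strongly satisfies `η` iff `M` is logically consistent and
`M''` (the extension of `M` by the context `C₀` with `kb₀ = ∅`, `ACC₀ ∅ = ∅`,
`ACC₀ {*} = {{*}}`, and a bridge rule `(0:*) ← body r` for each `r ∈ η`)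
is logically inconsistent. -/
theorem strong_satisfaction_iff_consistent_and_extension_inconsistent
    {ι α : Type*} (M : MCS ι α) (η : Set (IntegrityConstraint ι α))
    (star : α) (ACC0 : Set α → Set (Set α))
    (hACC0_empty : ACC0 ∅ = ∅) (hACC0_star : ACC0 {star} = {{star}}) :
    StrongSat M η ↔ (LogConsistent M ∧ ¬ LogConsistent (extMCS M η star ACC0)) := by
  rw [StrongSat, logConsistent_extMCS_iff M η star ACC0 hACC0_empty hACC0_star]
  simp only [not_exists, not_and, not_not]
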